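/- Let d ≥ 2 and let σ be a minimal permutation with d descents of size 2d. Then the second element of σ is 1 and the next-to-last element of σ is 2d: σ_2 = 1 and σ_{2d−1} = 2d. -/

import Mathlib

/-!
Deleting one entry of a minimal permutation must destroy a descent. Deleting the entry at `p`
merges the steps at `p - 1` and `p` into a single step, so: positions `0` and `n - 2` are descents,
no two adjacent steps are ascents, and around a valley or a peak `p` we have `σ (p-1) < σ (p+1)`.
For `n = 2d` and `d` descents the first two facts force the descents to sit exactly at the even
positions; then every `p` is a valley or a peak, so the entries at odd positions increase, as do
those at even positions. Hence `σ 1` is the minimum and `σ (2d - 2)` the maximum.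
-/

/-- `σ` has a descent at (0-based) position `i`, i.e. `σ i > σ (i+1)`. -/
def IsDescentAt {n : ℕ} (σ : Equiv.Perm (Fin n)) (i : ℕ) : Prop :=
  ∃ h : i + 1 < n, σ ⟨i + 1, h⟩ < σ ⟨i, Nat.lt_of_succ_lt h⟩

/-- The number of descents of `σ`. -/
noncomputable def descNum {n : ℕ} (σ : Equiv.Perm (Fin n)) : ℕ :=
  {i : ℕ | IsDescentAt σ i}.ncard

/-- `π` is a pattern of `σ` (written `π ≺ σ`). -/
def IsPattern {k n : ℕ} (π : Equiv.Perm (Fin k)) (σ : Equiv.Perm (Fin n)) : Prop :=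
  ∃ f : Fin k ↪o Fin n, ∀ ℓ m : Fin k, π ℓ < π m → σ (f ℓ) < σ (f m)

/-- `σ` is a minimal permutation with `d` descents: it has `d` descents and every
pattern `π ≺ σ` with `π ≠ σ` (equivalently, of strictly smaller size) has fewer
than `d` descents. -/
def MinimalWithDescents (d : ℕ) {n : ℕ} (σ : Equiv.Perm (Fin n)) : Prop :=
  descNum σ = d ∧
    ∀ (k : ℕ) (π : Equiv.Perm (Fin k)), k < n → IsPattern π σ → descNum π < d

namespace Equiv.Perm

variable {n : ℕ} (σ : Perm (Fin n))

/-- The entry of `σ` at position `i`, as a natural number; it is `0` for `i ≥ n`. -/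
def entry (i : ℕ) : ℕ := if h : i < n then σ ⟨i, h⟩ else 0

theorem entry_of_lt {i : ℕ} (h : i < n) : σ.entry i = σ ⟨i, h⟩ := dif_pos h

@[simp]
theorem entry_val (i : Fin n) : σ.entry i = σ i := σ.entry_of_lt i.isLt

theorem entry_lt {i : ℕ} (h : i < n) : σ.entry i < n := by
  rw [σ.entry_of_lt h]; exact (σ _).isLt

theorem entry_injOn : Set.InjOn σ.entry (Set.Iio n) := fun i hi j hj hij => by
  rw [σ.entry_of_lt hi, σ.entry_of_lt hj, Fin.val_inj, σ.apply_eq_iff_eq] at hij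
  exact congrArg Fin.val hij

theorem exists_entry_eq {v : ℕ} (hv : v < n) : ∃ i < n, σ.entry i = v :=
  ⟨σ.symm ⟨v, hv⟩, Fin.isLt _, by simp⟩

theorem entry_eq_zero_of_forall_le {i : ℕ} (hi : i < n)
    (hmin : ∀ j < n, σ.entry i ≤ σ.entry j) : σ.entry i = 0 := by
  obtain ⟨j, hj, hj0⟩ := σ.exists_entry_eq (v := 0) (by omega)
  have := hmin j hj
  omega

theorem entry_eq_sub_one_of_forall_ge {i : ℕ} (hi : i < n)
    (hmax : ∀ j < n, σ.entry j ≤ σ.entry i) : σ.entry i = n - 1 := by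
  obtain ⟨j, hj, hjn⟩ := σ.exists_entry_eq (v := n - 1) (by omega)
  have := hmax j hj
  have := σ.entry_lt hi
  omega

end Equiv.Perm

open Equiv

variable {n : ℕ} {σ : Perm (Fin n)}

theorem isDescentAt_iff {i : ℕ} :
    IsDescentAt σ i ↔ i + 1 < n ∧ σ.entry (i + 1) < σ.entry i := by
  refine ⟨fun ⟨h, hlt⟩ => ⟨h, ?_⟩, fun ⟨h, hlt⟩ => ⟨h, ?_⟩⟩
  · rwa [σ.entry_of_lt h, σ.entry_of_lt (by omega)]
  · rwa [σ.entry_of_lt h, σ.entry_of_lt (by omega)] at hlt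

theorem finite_setOf_isDescentAt (σ : Perm (Fin n)) : {i | IsDescentAt σ i}.Finite :=
  (Set.finite_Iio n).subset fun _ ⟨h, _⟩ => by simp only [Set.mem_Iio]; omega

theorem descNum_le_descNum_of_injOn {k : ℕ} {π : Perm (Fin k)} (ψ : ℕ → ℕ)
    (hmaps : ∀ i, IsDescentAt σ i → IsDescentAt π (ψ i))
    (hinj : Set.InjOn ψ {i | IsDescentAt σ i}) : descNum σ ≤ descNum π :=
  Set.ncard_le_ncard_of_injOn ψ hmaps hinj (finite_setOf_isDescentAt π)

def skip (p j : ℕ) : ℕ := if j < p then j else j + 1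

theorem skip_of_lt {p j : ℕ} (h : j < p) : skip p j = j := if_pos h

theorem skip_of_le {p j : ℕ} (h : p ≤ j) : skip p j = j + 1 := if_neg (Nat.not_lt.mpr h)
theorem Fin.val_succAbove_eq_skip {m : ℕ} (p : Fin (m + 1)) (j : Fin m) :
    (p.succAbove j : ℕ) = skip p j := by
  unfold Fin.succAbove skip
  split_ifs <;> simp_all [Fin.lt_def]

theorem exists_isPattern_succAbove {m : ℕ} (σ : Perm (Fin (m + 1))) (p : Fin (m + 1)) :
    ∃ π : Perm (Fin m), IsPattern π σ ∧
      ∀ a b, π a < π b ↔ σ (p.succAbove a) < σ (p.succAbove b) := by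
  have hex (i : Fin m) : ∃ j, (σ p).succAbove j = σ (p.succAbove i) :=
    Fin.exists_succAbove_eq fun h => Fin.succAbove_ne p i (σ.injective h)
  choose g hg using hex
  have hg_inj : Function.Injective g := fun a b hab => by
    have := congrArg (σ p).succAbove hab
    rwa [hg, hg, σ.apply_eq_iff_eq, Fin.succAbove_right_inj] at this
  have hrel (a b : Fin m) : g a < g b ↔ σ (p.succAbove a) < σ (p.succAbove b) := by
    rw [← hg, ← hg, Fin.succAbove_lt_succAbove_iff]
  let π : Perm (Fin m) := Equiv.ofBijective g (Finite.injective_iff_bijective.mp hg_inj)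
  exact ⟨π, ⟨Fin.succAboveOrderEmb p, fun a b => (hrel a b).mp⟩, hrel⟩

theorem exists_isPattern_delete (σ : Perm (Fin n)) {p : ℕ} (hp : p < n) :
    ∃ π : Perm (Fin (n - 1)), IsPattern π σ ∧ ∀ j, IsDescentAt π j ↔
      j + 2 < n ∧ σ.entry (skip p (j + 1)) < σ.entry (skip p j) := by
  obtain ⟨m, rfl⟩ : ∃ m, n = m + 1 := ⟨n - 1, by omega⟩
  obtain ⟨π, hpat, hrel⟩ := exists_isPattern_succAbove σ ⟨p, hp⟩
  refine ⟨π, hpat, fun j => ?_⟩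
  rw [isDescentAt_iff, show j + 2 < m + 1 ↔ j + 1 < m by omega]
  refine and_congr_right fun hj => ?_
  rw [π.entry_of_lt hj, π.entry_of_lt (by omega), ← Fin.lt_def, hrel, Fin.lt_def,
    ← Perm.entry_val, ← Perm.entry_val, Fin.val_succAbove_eq_skip, Fin.val_succAbove_eq_skip]

namespace MinimalWithDescents

variable {d : ℕ}

/-- Deleting the entry at position `p` merges the steps at `p - 1` and `p` into one step from
position `p - 1` to `p + 1`; if this loses no descent, the smaller pattern contradicts minimality.
For `p = 0` the hypothesis `hnot` reads `¬IsDescentAt σ 0`, as `0 - 1 = 0`. -/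
theorem false_of_delete (h : MinimalWithDescents d σ) {p : ℕ} (hp : p < n)
    (hnot : ¬(IsDescentAt σ (p - 1) ∧ IsDescentAt σ p))
    (hmerge : IsDescentAt σ (p - 1) ∨ IsDescentAt σ p →
      p + 1 < n ∧ σ.entry (p + 1) < σ.entry (p - 1)) : False := by
  obtain ⟨π, hpat, hdesc⟩ := exists_isPattern_delete σ hp
  let ψ : ℕ → ℕ := fun j => if j < p then j else j - 1
  have hinj : Set.InjOn ψ {i | IsDescentAt σ i} := by
    intro a ha b hb hab
    have : a = b ∨ a = p - 1 ∧ (b = p ∨ a = p) ∨ b = p - 1 ∧ (a = p ∨ b = p) := by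
      simp only [ψ] at hab
      split_ifs at hab <;> omega
    rcases this with hab | ⟨ha', hb' | ha''⟩ | ⟨hb', ha' | hb''⟩
    exacts [hab, absurd ⟨ha' ▸ ha, hb' ▸ hb⟩ hnot, absurd ⟨ha' ▸ ha, ha'' ▸ ha⟩ hnot,
      absurd ⟨hb' ▸ hb, ha' ▸ ha⟩ hnot, absurd ⟨hb' ▸ hb, hb'' ▸ hb⟩ hnot]
  have hmaps (j : ℕ) (hj : IsDescentAt σ j) : IsDescentAt π (ψ j) := by
    obtain ⟨hj1, hlt⟩ := isDescentAt_iff.mp hj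
    rw [hdesc]
    rcases Nat.lt_or_ge (j + 1) p with hjp | hjp
    · simp only [ψ, if_pos (by omega : j < p), skip_of_lt hjp, skip_of_lt (by omega : j < p)]
      exact ⟨by omega, hlt⟩
    rcases Nat.lt_or_ge p j with hpj | hpj
    · have hj0 : 1 ≤ j := by omega
      simp only [ψ, if_neg (by omega : ¬j < p)]
      rw [Nat.sub_add_cancel hj0, skip_of_le hpj.le, skip_of_le (by omega : p ≤ j - 1),
        Nat.sub_add_cancel hj0]
      exact ⟨by omega, hlt⟩
    have hp1 : 1 ≤ p := by
      by_contra hp0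
      obtain rfl : p = 0 := by omega
      obtain rfl : j = 0 := by omega
      exact hnot ⟨hj, hj⟩
    have hψ : ψ j = p - 1 := by simp only [ψ]; split_ifs <;> omega
    have hor : IsDescentAt σ (p - 1) ∨ IsDescentAt σ p := by
      rcases (by omega : j = p - 1 ∨ j = p) with rfl | rfl
      exacts [Or.inl hj, Or.inr hj]
    obtain ⟨hp2, hlt'⟩ := hmerge hor
    rw [hψ, skip_of_le (by omega : p ≤ p - 1 + 1), skip_of_lt (by omega : p - 1 < p),
      Nat.sub_add_cancel hp1]
    exact ⟨by omega, hlt'⟩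
  have hle := descNum_le_descNum_of_injOn ψ hmaps hinj
  have hlt := h.2 _ π (by omega) hpat
  rw [h.1] at hle
  omega

theorem isDescentAt_zero (h : MinimalWithDescents d σ) (hn : 0 < n) : IsDescentAt σ 0 := by
  by_contra h0
  exact h.false_of_delete hn (fun hd => h0 hd.2) fun hd => absurd (hd.elim id id) h0

theorem isDescentAt_sub_two (h : MinimalWithDescents d σ) (hn : 0 < n) :
    IsDescentAt σ (n - 2) := by
  by_contra hpen
  have hlast : ¬IsDescentAt σ (n - 1) := fun ⟨_, _⟩ => by omega
  have hn1 : n - 1 - 1 = n - 2 := by omega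
  refine h.false_of_delete (p := n - 1) (by omega) (fun hd => hlast hd.2) fun hd => ?_
  rw [hn1] at hd
  exact absurd (hd.resolve_right hlast) hpen

theorem isDescentAt_or_isDescentAt_succ (h : MinimalWithDescents d σ) {i : ℕ}
    (hi : i + 2 < n) : IsDescentAt σ i ∨ IsDescentAt σ (i + 1) := by
  by_contra hasc
  rw [not_or] at hasc
  exact h.false_of_delete (p := i + 1) (by omega) (fun hd => hasc.1 hd.1)
    fun hd => (hd.elim hasc.1 hasc.2).elim

theorem entry_lt_entry_add_two (h : MinimalWithDescents d σ) {i : ℕ} (hi : i + 2 < n)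
    (hnot : ¬(IsDescentAt σ i ∧ IsDescentAt σ (i + 1))) : σ.entry i < σ.entry (i + 2) := by
  by_contra hge
  have hne : σ.entry (i + 2) ≠ σ.entry i := fun he => by
    have := σ.entry_injOn (by simpa using hi) (by simp; omega) he
    omega
  exact h.false_of_delete (p := i + 1) (by omega) hnot
    fun _ => ⟨hi, lt_of_le_of_ne (not_lt.mp hge) hne⟩

end MinimalWithDescents

theorem Set.injOn_div_two_of_ncard_le {S : Set ℕ} {d : ℕ} (hS : S ⊆ Set.Iio (2 * d))
    (hcover : ∀ k < d, 2 * k ∈ S ∨ 2 * k + 1 ∈ S) (hcard : S.ncard ≤ d) : S.InjOn (· / 2) := by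
  have himage : (· / 2) '' S = Set.Iio d := by
    ext k
    constructor
    · rintro ⟨i, hi, rfl⟩
      have := hS hi
      simp only [Set.mem_Iio] at this ⊢
      omega
    · intro hk
      rcases hcover k hk with hk' | hk'
      exacts [⟨_, hk', by simp only; omega⟩, ⟨_, hk', by simp only; omega⟩]
  have hfin : S.Finite := (Set.finite_Iio _).subset hS
  refine Set.injOn_of_ncard_image_eq (le_antisymm (Set.ncard_image_le hfin) ?_) hfin
  rwa [himage, Set.ncard_Iio_nat]

namespace MinimalWithDescents

variable {d : ℕ} {σ : Perm (Fin (2 * d))}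

/-- With only `2 * d - 1` positions, `d` descents and no two adjacent ascents force the descents
to alternate. -/
theorem isDescentAt_iff_even (h : MinimalWithDescents d σ) {i : ℕ} :
    IsDescentAt σ i ↔ Even i ∧ i + 1 < 2 * d := by
  have hcover (k : ℕ) (hk : k < d) : IsDescentAt σ (2 * k) ∨ IsDescentAt σ (2 * k + 1) := by
    rcases Nat.lt_or_ge (k + 1) d with hk1 | hk1
    · exact h.isDescentAt_or_isDescentAt_succ (by omega)
    · have := h.isDescentAt_sub_two (by omega)
      exact Or.inl (by rwa [show 2 * k = 2 * d - 2 by omega])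
  have hinj := Set.injOn_div_two_of_ncard_le (S := {i | IsDescentAt σ i})
    (fun i ⟨_, _⟩ => by simp only [Set.mem_Iio]; omega) hcover h.1.le
  have hodd (k : ℕ) (hk : IsDescentAt σ (2 * k)) : ¬IsDescentAt σ (2 * k + 1) := fun hk' => by
    have := hinj hk hk' (by simp only; omega)
    omega
  have heven (k : ℕ) (hk : k < d) : IsDescentAt σ (2 * k) := by
    induction k with
    | zero => exact h.isDescentAt_zero (by omega)
    | succ k ih =>
      have := (h.isDescentAt_or_isDescentAt_succ (i := 2 * k + 1) (by omega)).resolve_left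
        (hodd k (ih (by omega)))
      rwa [show 2 * (k + 1) = 2 * k + 1 + 1 by ring]
  obtain ⟨k, rfl | rfl⟩ := Nat.even_or_odd' i
  · refine ⟨fun ⟨hk, _⟩ => ⟨even_two_mul k, hk⟩, fun ⟨_, hk⟩ => heven k (by omega)⟩
  · refine ⟨fun hk => ?_, fun ⟨he, _⟩ => absurd he (Nat.not_even_two_mul_add_one k)⟩
    have hk1 := hk.fst
    exact (hodd k (heven k (by omega)) hk).elim

theorem not_isDescentAt_two_mul_add_one (h : MinimalWithDescents d σ) (k : ℕ) :
    ¬IsDescentAt σ (2 * k + 1) := by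
  rw [h.isDescentAt_iff_even, Nat.even_add_one, not_and]
  exact fun hodd => absurd (even_two_mul k) hodd

theorem entry_two_mul_add_one_lt (h : MinimalWithDescents d σ) {k : ℕ} (hk : k < d) :
    σ.entry (2 * k + 1) < σ.entry (2 * k) :=
  (isDescentAt_iff.mp (h.isDescentAt_iff_even.mpr ⟨even_two_mul k, by omega⟩)).2

theorem strictMonoOn_entry_two_mul (h : MinimalWithDescents d σ) :
    StrictMonoOn (fun k => σ.entry (2 * k)) (Set.Iic (d - 1)) :=
  strictMonoOn_Iic_of_lt_succ fun k hk => by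
    simpa [Order.succ_eq_add_one, mul_add] using
      h.entry_lt_entry_add_two (i := 2 * k) (by omega)
        fun hd => h.not_isDescentAt_two_mul_add_one k hd.2

theorem strictMonoOn_entry_two_mul_add_one (h : MinimalWithDescents d σ) :
    StrictMonoOn (fun k => σ.entry (2 * k + 1)) (Set.Iic (d - 1)) :=
  strictMonoOn_Iic_of_lt_succ fun k hk => by
    simpa [Order.succ_eq_add_one, mul_add, add_right_comm] using
      h.entry_lt_entry_add_two (i := 2 * k + 1) (by omega)
        fun hd => h.not_isDescentAt_two_mul_add_one k hd.1

theorem entry_one_le (h : MinimalWithDescents d σ) {x : ℕ} (hx : x < 2 * d) :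
    σ.entry 1 ≤ σ.entry x := by
  have hodd (k : ℕ) (hk : k < d) : σ.entry 1 ≤ σ.entry (2 * k + 1) :=
    h.strictMonoOn_entry_two_mul_add_one.monotoneOn (a := 0) (by simp) (by simp; omega)
      (Nat.zero_le k)
  obtain ⟨k, rfl | rfl⟩ := Nat.even_or_odd' x
  · exact (hodd k (by omega)).trans (h.entry_two_mul_add_one_lt (by omega)).le
  · exact hodd k (by omega)

theorem entry_le_entry_two_mul_sub_two (h : MinimalWithDescents d σ) {x : ℕ}
    (hx : x < 2 * d) : σ.entry x ≤ σ.entry (2 * d - 2) := by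
  have heven (k : ℕ) (hk : k < d) : σ.entry (2 * k) ≤ σ.entry (2 * d - 2) := by
    rw [show 2 * d - 2 = 2 * (d - 1) by omega]
    exact h.strictMonoOn_entry_two_mul.monotoneOn (by simp; omega) (by simp) (by omega)
  obtain ⟨k, rfl | rfl⟩ := Nat.even_or_odd' x
  · exact heven k (by omega)
  · exact (h.entry_two_mul_add_one_lt (by omega)).le.trans (heven k (by omega))

end MinimalWithDescents

/-- A minimal permutation with `d ≥ 2` descents of size `2d` has `1` as its second
element and `2d` as its next-to-last element (in 0-based terms, the value at position
`1` is `0` and the value at position `2d - 2` is `2d - 1`). -/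
theorem minimal_of_size_two_mul_second_and_penultimate (d : ℕ) (hd : 2 ≤ d)
    (σ : Equiv.Perm (Fin (2 * d))) (h : MinimalWithDescents d σ) :
    σ ⟨1, by omega⟩ = ⟨0, by omega⟩ ∧
      σ ⟨2 * d - 2, by omega⟩ = ⟨2 * d - 1, by omega⟩ := by
  have hmin := σ.entry_eq_zero_of_forall_le (i := 1) (by omega) fun _ => h.entry_one_le
  have hmax := σ.entry_eq_sub_one_of_forall_ge (i := 2 * d - 2) (by omega)
    fun _ => h.entry_le_entry_two_mul_sub_two
  rw [σ.entry_of_lt (by omega)] at hmin hmax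
  exact ⟨Fin.ext hmin, Fin.ext hmax⟩
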